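/- arXiv:math/0204156 — 6 statements merged into one kernel-verified Lean document; each statement's English description precedes it below -/
import Mathlib

section
/- For linear forms a_1, b_1, a_2, b_2, l_1, l_2, w in k[x_0,...,x_3] and q_i = a_i l_1 + b_i l_2 (i=1,2), the matrix identity B_1 A_0 + B_0 A_1 = 0 holds, where B_0 = (-q_1, -l_1, w, 0; -q_2, -l_2, 0, w), A_0 = (w,0; 0,w; q_1,l_1; q_2,l_2)ᵀ-shaped 4×2 matrix with rows (w,0),(0,w),(q_1,l_1),(q_2,l_2), B_1 = (0,0,a_1,b_1; 0,0,a_2,b_2), and A_1 the 4×2 matrix with rows (a_1+b_2, 1), (b_1 a_2 - b_2 a_1, 0), (0,0), (0,0). -/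
/- The second column of `B₁ A₀` is `(q₁, q₂)`, cancelled by the second column of `B₀ A₁`. In the
first column the `q`-terms leave `(b₁ q₂ - b₂ q₁, a₂ q₁ - a₁ q₂) = (b₁ a₂ - b₂ a₁) • (l₁, l₂)`,
which the entry `b₁ a₂ - b₂ a₁` of `A₁` is chosen to cancel. -/
theorem deformation_matrix_identity_of_commRing {R : Type*} [CommRing R]
    (a₁ b₁ a₂ b₂ l₁ l₂ w : R) :
    !![0, 0, a₁, b₁; 0, 0, a₂, b₂] *
        !![w, 0; 0, w; a₁ * l₁ + b₁ * l₂, l₁; a₂ * l₁ + b₂ * l₂, l₂] +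
      !![-(a₁ * l₁ + b₁ * l₂), -l₁, w, 0; -(a₂ * l₁ + b₂ * l₂), -l₂, 0, w] *
        !![a₁ + b₂, 1; b₁ * a₂ - b₂ * a₁, 0; 0, 0; 0, 0] = 0 := by
  ext i j
  fin_cases i <;> fin_cases j <;> simp <;> ring

/-- the first-order deformation matrix identity
`B₁ A₀ + B₀ A₁ = 0` for the explicit matrices of linear and quadratic
forms over `k[x₀,…,x₃]`, where `qᵢ = aᵢ l₁ + bᵢ l₂`. -/
theorem deformation_matrix_identity
    (k : Type*) [Field k]
    (a₁ b₁ a₂ b₂ l₁ l₂ w : MvPolynomial (Fin 4) k)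
    (q₁ q₂ : MvPolynomial (Fin 4) k)
    (hq₁ : q₁ = a₁ * l₁ + b₁ * l₂) (hq₂ : q₂ = a₂ * l₁ + b₂ * l₂) :
    let B₀ : Matrix (Fin 2) (Fin 4) (MvPolynomial (Fin 4) k) :=
      !![-q₁, -l₁, w, 0; -q₂, -l₂, 0, w]
    let A₀ : Matrix (Fin 4) (Fin 2) (MvPolynomial (Fin 4) k) :=
      !![w, 0; 0, w; q₁, l₁; q₂, l₂]
    let B₁ : Matrix (Fin 2) (Fin 4) (MvPolynomial (Fin 4) k) :=
      !![0, 0, a₁, b₁; 0, 0, a₂, b₂]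
    let A₁ : Matrix (Fin 4) (Fin 2) (MvPolynomial (Fin 4) k) :=
      !![a₁ + b₂, 1; b₁ * a₂ - b₂ * a₁, 0; 0, 0; 0, 0]
    B₁ * A₀ + B₀ * A₁ = 0 := by
  subst hq₁ hq₂
  exact deformation_matrix_identity_of_commRing a₁ b₁ a₂ b₂ l₁ l₂ w
end

section
/- With notation as above (q_i = a_i l_1 + b_i l_2), for every scalar t the matrix product (B_0 + t B_1)(A_0 + t A_1) = 0, i.e. the deformed pair still forms a complex for all t. -/
open MvPolynomial Matrix

/-!
Expanding in `t`, `(B₀ + t B₁)(A₀ + t A₁) = B₀A₀ + t (B₀A₁ + B₁A₀) + t² B₁A₁`. The constant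
term vanishes for any `q₁, q₂`; the quadratic one because `B₁` lives on the last two columns
and `A₁` on the first two rows; only the linear term uses `qᵢ = aᵢ l₁ + bᵢ l₂`.
-/

theorem Matrix.add_smul_mul_add_smul_eq_zero {R m n p : Type*} [CommSemiring R] [Fintype n]
    {B₀ B₁ : Matrix m n R} {A₀ A₁ : Matrix n p R} (h₀ : B₀ * A₀ = 0)
    (h₁ : B₀ * A₁ + B₁ * A₀ = 0) (h₂ : B₁ * A₁ = 0) (c : R) :
    (B₀ + c • B₁) * (A₀ + c • A₁) = 0 := by
  calc (B₀ + c • B₁) * (A₀ + c • A₁)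
      = B₀ * A₀ + c • (B₀ * A₁ + B₁ * A₀) + (c * c) • (B₁ * A₁) := by
        simp only [Matrix.add_mul, Matrix.mul_add, Matrix.smul_mul, Matrix.mul_smul, smul_add, mul_smul]
        abel
    _ = 0 := by rw [h₀, h₁, h₂, smul_zero, smul_zero, add_zero, add_zero]

section DeformedPair

variable {R : Type*} [CommRing R] (a₁ b₁ a₂ b₂ l₁ l₂ w q₁ q₂ : R)

theorem deformedPair_mul₀ :
    !![-q₁, -l₁, w, 0; -q₂, -l₂, 0, w] * !![w, 0; 0, w; q₁, l₁; q₂, l₂] = 0 := by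
  ext i j
  fin_cases i <;> fin_cases j <;> simp <;> ring

theorem deformedPair_mul₂ :
    !![0, 0, a₁, b₁; 0, 0, a₂, b₂] * !![a₁ + b₂, 1; b₁ * a₂ - b₂ * a₁, 0; 0, 0; 0, 0] = 0 := by
  ext i j
  fin_cases i <;> fin_cases j <;> simp

theorem deformedPair_mul₁ (hq₁ : q₁ = a₁ * l₁ + b₁ * l₂) (hq₂ : q₂ = a₂ * l₁ + b₂ * l₂) :
    !![-q₁, -l₁, w, 0; -q₂, -l₂, 0, w] * !![a₁ + b₂, 1; b₁ * a₂ - b₂ * a₁, 0; 0, 0; 0, 0] +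
      !![0, 0, a₁, b₁; 0, 0, a₂, b₂] * !![w, 0; 0, w; q₁, l₁; q₂, l₂] = 0 := by
  subst hq₁ hq₂
  ext i j
  fin_cases i <;> fin_cases j <;> simp <;> ring

end DeformedPair

/-- with `qᵢ = aᵢ l₁ + bᵢ l₂`, for every scalar `t` the deformed
pair still forms a complex: `(B₀ + t B₁)(A₀ + t A₁) = 0`. -/
theorem deformed_pair_is_complex
    (k : Type*) [Field k]
    (a₁ b₁ a₂ b₂ l₁ l₂ w : MvPolynomial (Fin 4) k)
    (q₁ q₂ : MvPolynomial (Fin 4) k)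
    (hq₁ : q₁ = a₁ * l₁ + b₁ * l₂) (hq₂ : q₂ = a₂ * l₁ + b₂ * l₂)
    (t : k) :
    let B₀ : Matrix (Fin 2) (Fin 4) (MvPolynomial (Fin 4) k) :=
      !![-q₁, -l₁, w, 0; -q₂, -l₂, 0, w]
    let A₀ : Matrix (Fin 4) (Fin 2) (MvPolynomial (Fin 4) k) :=
      !![w, 0; 0, w; q₁, l₁; q₂, l₂]
    let B₁ : Matrix (Fin 2) (Fin 4) (MvPolynomial (Fin 4) k) :=
      !![0, 0, a₁, b₁; 0, 0, a₂, b₂]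
    let A₁ : Matrix (Fin 4) (Fin 2) (MvPolynomial (Fin 4) k) :=
      !![a₁ + b₂, 1; b₁ * a₂ - b₂ * a₁, 0; 0, 0; 0, 0]
    (B₀ + (C t : MvPolynomial (Fin 4) k) • B₁) * (A₀ + (C t : MvPolynomial (Fin 4) k) • A₁) = 0 :=
  Matrix.add_smul_mul_add_smul_eq_zero (deformedPair_mul₀ l₁ l₂ w q₁ q₂)
    (deformedPair_mul₁ a₁ b₁ a₂ b₂ l₁ l₂ w q₁ q₂ hq₁ hq₂) (deformedPair_mul₂ a₁ b₁ a₂ b₂) (C t)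
end

section
/- The ring ℤ[s,t,u]/(s⁴, t³-st²+s²t-s³, f), with f = u⁹ + (10s-3t)u⁸ + (55s²-30st+9t²)u⁷ + (220s³-165s²t+90st²)u⁶ + (495s²t²-660s³t)u⁵ + 1980s³t²u⁴, is a free ℤ-module of rank 108 with graded Betti numbers 1, 3, 6, 9, 11, 12, 12, 12, 12, 11, 9, 6, 3, 1 in degrees 0 through 13. -/
/-!
Adjoining `s`, `t`, `u` one at a time, each relation is monic in the new variable:
`ℤ[s]/(s⁴)`, then a cubic in `t`, then the degree-9 relation `f` in `u`. So the quotient is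
the tower of `AdjoinRoot`s of these monic polynomials, and the monomials `s^a t^b u^c` with
`a < 4`, `b < 3`, `c < 9` form a `ℤ`-basis: they span because every monomial can be reduced
by the relations, and they are independent because they map to the product of the power
bases of the tower. The relations are homogeneous, so the reduction preserves degree and the
degree-`d` piece has as basis the reduced monomials with `a + b + c = d`.
-/

open Polynomial in
theorem Polynomial.Monic.nontrivial_adjoinRoot {R : Type*} [CommRing R] [Nontrivial R]
    {g : R[X]} (hg : g.Monic) (hdeg : g.natDegree ≠ 0) : Nontrivial (AdjoinRoot g) := by
  refine Ideal.Quotient.nontrivial_iff.mpr fun htop => hdeg ?_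
  rw [Ideal.span_singleton_eq_top, hg.isUnit_iff] at htop
  simp [htop]

noncomputable section

namespace ChowM1

section Relations

variable {A B : Type*} [CommRing A] [CommRing B]

def tRelation (s t : A) : A := t^3 - s*t^2 + s^2*t - s^3

def uRelation (s t u : A) : A :=
  u^9 + (10*s - 3*t)*u^8 + (55*s^2 - 30*s*t + 9*t^2)*u^7
    + (220*s^3 - 165*s^2*t + 90*s*t^2)*u^6
    + (495*s^2*t^2 - 660*s^3*t)*u^5 + 1980*s^3*t^2*u^4

theorem map_tRelation {F : Type*} [FunLike F A B] [RingHomClass F A B] (φ : F) (s t : A) :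
    φ (tRelation s t) = tRelation (φ s) (φ t) := by
  simp [tRelation]

theorem map_uRelation {F : Type*} [FunLike F A B] [RingHomClass F A B] (φ : F) (s t u : A) :
    φ (uRelation s t u) = uRelation (φ s) (φ t) (φ u) := by
  simp [uRelation, map_ofNat]

end Relations

section Model

open Polynomial

abbrev R₁ := AdjoinRoot (X ^ 4 : ℤ[X])

def tPoly : R₁[X] := tRelation (C (AdjoinRoot.root _)) X

abbrev R₂ := AdjoinRoot tPoly

def uPoly : R₂[X] :=
  uRelation (C (algebraMap R₁ R₂ (AdjoinRoot.root _))) (C (AdjoinRoot.root _)) X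

abbrev R₃ := AdjoinRoot uPoly

theorem tPoly_monic : tPoly.Monic := by unfold tPoly tRelation; monicity!

theorem uPoly_monic : uPoly.Monic := by unfold uPoly uRelation; monicity!

instance : Nontrivial R₁ := (monic_X_pow 4).nontrivial_adjoinRoot (by simp)

theorem tPoly_natDegree : tPoly.natDegree = 3 := by unfold tPoly tRelation; compute_degree!

instance : Nontrivial R₂ := tPoly_monic.nontrivial_adjoinRoot (by simp [tPoly_natDegree])

theorem uPoly_natDegree : uPoly.natDegree = 9 := by unfold uPoly uRelation; compute_degree!

def sM : R₃ := algebraMap R₁ R₃ (AdjoinRoot.root _)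
def tM : R₃ := algebraMap R₂ R₃ (AdjoinRoot.root _)
def uM : R₃ := AdjoinRoot.root _

theorem sM_pow_four : sM ^ 4 = 0 := by
  rw [sM, ← map_pow, ← AdjoinRoot.mk_X, ← map_pow, AdjoinRoot.mk_self, map_zero]

theorem tRelation_sM_tM : tRelation sM tM = 0 := by
  have h₂ : AdjoinRoot.mk tPoly (tRelation (C (AdjoinRoot.root _)) X) = 0 := AdjoinRoot.mk_self
  have h := congrArg (algebraMap R₂ R₃) h₂
  rwa [map_zero, map_tRelation, map_tRelation, AdjoinRoot.mk_C, AdjoinRoot.mk_X,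
    ← AdjoinRoot.algebraMap_eq, ← IsScalarTower.algebraMap_apply] at h

theorem uRelation_sM_tM_uM : uRelation sM tM uM = 0 := by
  have h : AdjoinRoot.mk uPoly
      (uRelation (C (algebraMap R₁ R₂ (AdjoinRoot.root _))) (C (AdjoinRoot.root _)) X) = 0 :=
    AdjoinRoot.mk_self
  rwa [map_uRelation, AdjoinRoot.mk_C, AdjoinRoot.mk_C, AdjoinRoot.mk_X,
    ← AdjoinRoot.algebraMap_eq, ← IsScalarTower.algebraMap_apply] at h

def pb₁ : PowerBasis ℤ R₁ := AdjoinRoot.powerBasis' (monic_X_pow 4)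
def pb₂ : PowerBasis R₁ R₂ := AdjoinRoot.powerBasis' tPoly_monic
def pb₃ : PowerBasis R₂ R₃ := AdjoinRoot.powerBasis' uPoly_monic

theorem pb₁_dim : pb₁.dim = 4 := natDegree_X_pow 4
theorem pb₂_dim : pb₂.dim = 3 := tPoly_natDegree
theorem pb₃_dim : pb₃.dim = 9 := uPoly_natDegree

def modelBasis : Module.Basis (Fin 4 × Fin 3 × Fin 9) ℤ R₃ :=
  ((pb₁.basis.smulTower pb₂.basis).smulTower pb₃.basis).reindex
    ((((finCongr pb₁_dim).prodCongr (finCongr pb₂_dim)).prodCongr (finCongr pb₃_dim)).trans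
      (Equiv.prodAssoc _ _ _))

theorem modelBasis_apply (p : Fin 4 × Fin 3 × Fin 9) :
    modelBasis p = sM ^ (p.1 : ℕ) * tM ^ (p.2.1 : ℕ) * uM ^ (p.2.2 : ℕ) := by
  rw [modelBasis, Module.Basis.reindex_apply, Module.Basis.smulTower_apply,
    Module.Basis.smulTower_apply]
  simp only [PowerBasis.basis_eq_pow, Algebra.smul_def, map_mul, map_pow]
  simp only [pb₁, pb₂, pb₃, AdjoinRoot.powerBasis'_gen, sM, tM, uM,
    IsScalarTower.algebraMap_apply R₁ R₂ R₃]
  rfl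

end Model

section Quotient

open MvPolynomial

def chowIdeal : Ideal (MvPolynomial (Fin 3) ℤ) :=
  Ideal.span {X 0 ^ 4, tRelation (X 0) (X 1), uRelation (X 0) (X 1) (X 2)}

abbrev ChowRing := MvPolynomial (Fin 3) ℤ ⧸ chowIdeal

def s : ChowRing := Ideal.Quotient.mk chowIdeal (X 0)
def t : ChowRing := Ideal.Quotient.mk chowIdeal (X 1)
def u : ChowRing := Ideal.Quotient.mk chowIdeal (X 2)

theorem s_pow_four : s ^ 4 = 0 := by
  rw [s, ← map_pow, Ideal.Quotient.eq_zero_iff_mem]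
  exact Ideal.subset_span (by simp)

theorem tRelation_s_t : tRelation s t = 0 := by
  rw [s, t, ← map_tRelation, Ideal.Quotient.eq_zero_iff_mem]
  exact Ideal.subset_span (by simp)

theorem uRelation_s_t_u : uRelation s t u = 0 := by
  rw [s, t, u, ← map_uRelation, Ideal.Quotient.eq_zero_iff_mem]
  exact Ideal.subset_span (by simp)

def mono (a b c : ℕ) : ChowRing := s ^ a * t ^ b * u ^ c

theorem mono_add_four (a b c : ℕ) : mono (a + 4) b c = 0 := by
  rw [mono, pow_add, s_pow_four, mul_zero, zero_mul, zero_mul]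

theorem mono_add_three (a b c : ℕ) :
    mono a (b + 3) c = mono (a + 1) (b + 2) c - mono (a + 2) (b + 1) c + mono (a + 3) b c := by
  have h := tRelation_s_t
  unfold tRelation at h
  simp only [mono]
  linear_combination (s ^ a * t ^ b * u ^ c) * h

theorem mono_add_nine (a b c : ℕ) :
    mono a b (c + 9) = (-10 : ℤ) • mono (a + 1) b (c + 8) + (3 : ℤ) • mono a (b + 1) (c + 8)
      + (-55 : ℤ) • mono (a + 2) b (c + 7) + (30 : ℤ) • mono (a + 1) (b + 1) (c + 7)
      + (-9 : ℤ) • mono a (b + 2) (c + 7) + (-220 : ℤ) • mono (a + 3) b (c + 6)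
      + (165 : ℤ) • mono (a + 2) (b + 1) (c + 6) + (-90 : ℤ) • mono (a + 1) (b + 2) (c + 6)
      + (-495 : ℤ) • mono (a + 2) (b + 2) (c + 5) + (660 : ℤ) • mono (a + 3) (b + 1) (c + 5)
      + (-1980 : ℤ) • mono (a + 3) (b + 2) (c + 4) := by
  have h := uRelation_s_t_u
  unfold uRelation at h
  simp only [mono, zsmul_eq_mul]
  push_cast
  linear_combination (s ^ a * t ^ b * u ^ c) * h

def weight (p : Fin 4 × Fin 3 × Fin 9) : ℕ := p.1 + p.2.1 + p.2.2

def reducedMono (p : Fin 4 × Fin 3 × Fin 9) : ChowRing := mono p.1 p.2.1 p.2.2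

def reducedSpan (d : ℕ) : Submodule ℤ ChowRing :=
  Submodule.span ℤ (reducedMono '' {p | weight p = d})

theorem mono_mem_reducedSpan (a b c d : ℕ) (h : a + b + c = d) :
    mono a b c ∈ reducedSpan d := by
  by_cases hc : 9 ≤ c
  · obtain ⟨c, rfl⟩ := Nat.exists_eq_add_of_le' hc
    rw [mono_add_nine]
    apply_rules [add_mem, Submodule.smul_mem] <;> exact mono_mem_reducedSpan _ _ _ d (by omega)
  by_cases hb : 3 ≤ b
  · obtain ⟨b, rfl⟩ := Nat.exists_eq_add_of_le' hb
    rw [mono_add_three]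
    apply_rules [add_mem, sub_mem] <;> exact mono_mem_reducedSpan _ _ _ d (by omega)
  by_cases ha : 4 ≤ a
  · obtain ⟨a, rfl⟩ := Nat.exists_eq_add_of_le' ha
    rw [mono_add_four]
    exact zero_mem _
  exact Submodule.subset_span
    ⟨(⟨a, by omega⟩, ⟨b, by omega⟩, ⟨c, by omega⟩), h, rfl⟩
termination_by a + 2 * b + 5 * c

theorem mk_monomial_one (m : Fin 3 →₀ ℕ) :
    Ideal.Quotient.mk chowIdeal (monomial m 1) = mono (m 0) (m 1) (m 2) := by
  rw [monomial_eq, Finsupp.prod_fintype _ _ (fun i => pow_zero _), Fin.prod_univ_three]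
  simp [mono, s, t, u]

theorem X_pow_mul_X_pow_mul_X_pow_mem (a b c : ℕ) :
    X 0 ^ a * X 1 ^ b * X 2 ^ c ∈ homogeneousSubmodule (Fin 3) ℤ (a + b + c) :=
  ((isHomogeneous_X_pow 0 a).mul (isHomogeneous_X_pow 1 b)).mul (isHomogeneous_X_pow 2 c)

theorem map_homogeneousSubmodule (d : ℕ) :
    (homogeneousSubmodule (Fin 3) ℤ d).map (Ideal.Quotient.mkₐ ℤ chowIdeal).toLinearMap =
      reducedSpan d := by
  apply le_antisymm
  · rw [homogeneousSubmodule_eq_finsupp_supported, AddMonoidAlgebra.supported_eq_span_single,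
      Submodule.map_span, Submodule.span_le]
    rintro _ ⟨_, ⟨m, hm, rfl⟩, rfl⟩
    have hdeg : m 0 + m 1 + m 2 = d := by
      rw [← hm, Finsupp.degree_eq_sum, Fin.sum_univ_three]
    change Ideal.Quotient.mk chowIdeal (monomial m 1) ∈ reducedSpan d
    rw [mk_monomial_one]
    exact mono_mem_reducedSpan _ _ _ _ hdeg
  · rw [reducedSpan, Submodule.span_le]
    rintro _ ⟨p, hp, rfl⟩
    exact ⟨_, hp ▸ X_pow_mul_X_pow_mul_X_pow_mem _ _ _, rfl⟩

theorem span_range_reducedMono : Submodule.span ℤ (Set.range reducedMono) = ⊤ := by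
  refine eq_top_iff.2 fun x _ => ?_
  obtain ⟨P, rfl⟩ := Ideal.Quotient.mkₐ_surjective ℤ chowIdeal x
  rw [← sum_homogeneousComponent P, map_sum]
  refine Submodule.sum_mem _ fun d _ =>
    Submodule.span_mono (Set.image_subset_range _ {p | weight p = d}) ?_
  rw [← reducedSpan, ← map_homogeneousSubmodule]
  exact ⟨_, homogeneousComponent_mem d P, rfl⟩

def toModel : ChowRing →ₐ[ℤ] R₃ :=
  Ideal.Quotient.liftₐ chowIdeal (aeval ![sM, tM, uM]) fun _ ha => by
    refine (Ideal.span_le (I := RingHom.ker (aeval ![sM, tM, uM])).2 ?_ ha)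
    simp [Set.insert_subset_iff, map_tRelation, map_uRelation, sM_pow_four, tRelation_sM_tM,
      uRelation_sM_tM_uM]

theorem toModel_mk (P : MvPolynomial (Fin 3) ℤ) :
    toModel (Ideal.Quotient.mk chowIdeal P) = aeval ![sM, tM, uM] P :=
  rfl

theorem toModel_reducedMono (p : Fin 4 × Fin 3 × Fin 9) :
    toModel (reducedMono p) = modelBasis p := by
  simp [reducedMono, mono, s, t, u, toModel_mk, modelBasis_apply]

theorem linearIndependent_reducedMono : LinearIndependent ℤ reducedMono := by
  apply LinearIndependent.of_comp toModel.toLinearMap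
  rw [show toModel.toLinearMap ∘ reducedMono = modelBasis from funext toModel_reducedMono]
  exact modelBasis.linearIndependent

def reducedBasis : Module.Basis (Fin 4 × Fin 3 × Fin 9) ℤ ChowRing :=
  .mk linearIndependent_reducedMono span_range_reducedMono.ge

theorem finrank_reducedSpan (d : ℕ) :
    Module.finrank ℤ (reducedSpan d) = Fintype.card {p // weight p = d} := by
  rw [reducedSpan, Set.image_eq_range]
  exact finrank_span_eq_card (linearIndependent_reducedMono.comp _ Subtype.val_injective)

theorem finrank_chowRing : Module.finrank ℤ ChowRing = 108 :=
  Module.finrank_eq_card_basis reducedBasis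

theorem finrank_map_homogeneousSubmodule (d : ℕ) :
    Module.finrank ℤ ((homogeneousSubmodule (Fin 3) ℤ d).map
      (Ideal.Quotient.mkₐ ℤ chowIdeal).toLinearMap) = Fintype.card {p // weight p = d} := by
  rw [map_homogeneousSubmodule, finrank_reducedSpan]

theorem reducedSpan_eq_bot {d : ℕ} (hd : 14 ≤ d) : reducedSpan d = ⊥ := by
  rw [reducedSpan, Submodule.span_eq_bot]
  rintro _ ⟨⟨a, b, c⟩, hp, rfl⟩
  simp only [weight, Set.mem_ofPred_eq] at hp
  omega

end Quotient

end ChowM1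

end

open MvPolynomial

/-- `ℤ[s,t,u]/(s⁴, t³-st²+s²t-s³, f)` (with `f` the explicit
degree-9 relation) is a free `ℤ`-module of rank 108 with graded Betti
numbers 1,3,6,9,11,12,12,12,12,11,9,6,3,1 in degrees 0–13. -/
theorem chow_ring_M1_betti :
    let s : MvPolynomial (Fin 3) ℤ := X 0
    let t : MvPolynomial (Fin 3) ℤ := X 1
    let u : MvPolynomial (Fin 3) ℤ := X 2
    let f : MvPolynomial (Fin 3) ℤ :=
      u^9 + (10*s - 3*t)*u^8 + (55*s^2 - 30*s*t + 9*t^2)*u^7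
        + (220*s^3 - 165*s^2*t + 90*s*t^2)*u^6
        + (495*s^2*t^2 - 660*s^3*t)*u^5 + 1980*s^3*t^2*u^4
    let I : Ideal (MvPolynomial (Fin 3) ℤ) :=
      Ideal.span {s^4, t^3 - s*t^2 + s^2*t - s^3, f}
    let piece : ℕ → Submodule ℤ (MvPolynomial (Fin 3) ℤ ⧸ I) := fun d =>
      Submodule.map (Ideal.Quotient.mkₐ ℤ I).toLinearMap
        (homogeneousSubmodule (Fin 3) ℤ d)
    Module.Free ℤ (MvPolynomial (Fin 3) ℤ ⧸ I) ∧
    Module.finrank ℤ (MvPolynomial (Fin 3) ℤ ⧸ I) = 108 ∧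
    (∀ d : Fin 14, Module.finrank ℤ (piece d) =
      [1,3,6,9,11,12,12,12,12,11,9,6,3,1].get d) ∧
    ∀ d, 14 ≤ d → piece d = ⊥ := by
  intro s t u f I piece
  refine ⟨.of_basis ChowM1.reducedBasis, ChowM1.finrank_chowRing, fun d => ?_,
    fun d hd => (ChowM1.map_homogeneousSubmodule d).trans (ChowM1.reducedSpan_eq_bot hd)⟩
  refine (ChowM1.finrank_map_homogeneousSubmodule d).trans ?_
  revert d
  decide
end

section
/- Let k be a field of characteristic 0 and let Q = (l_1, w, 0; l_2, 0, w) be a 2×3 matrix of linear forms in four variables with w, l_1, l_2 linearly independent. Let F_Q = {SQ - QR : S ∈ gl_2(k), R ∈ gl_3(k)} ⊂ Hom(k², k³ ⊗ V*) and let T'_Q be the 5-dimensional space of matrices (ρl_3, λ_1l_1+λ_2l_2+λ_3l_3, 0; σl_3, 0, λ_1l_1+λ_2l_2+λ_3l_3) where l_3 is a fixed linear form making w,l_1,l_2,l_3 a basis of V*. Then T'_Q ∩ F_Q = 0. -/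
open Matrix

/-! Compare the coefficients of `w, l₁, l₂, l₃` on both sides of `M = SQ - QR`. The `l₃`-coefficients
of the entries `(0,0)` and `(1,0)` give `ρ = σ = 0`; the `l₂`-coefficient of the entry `(1,1)` gives
`R₀₁ = 0`; and then the entry `(0,1)`, whose right-hand side is `(S₀₀ - R₁₁) w - R₀₁ l₁`, forces
`λ₁ = λ₂ = λ₃ = 0`. -/

theorem LinearIndependent.coeffs_eq_of_four {R M : Type*} [Semiring R] [AddCommMonoid M]
    [Module R M] {x₀ x₁ x₂ x₃ : M} (hx : LinearIndependent R ![x₀, x₁, x₂, x₃])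
    {a b c d a' b' c' d' : R}
    (h : a • x₀ + b • x₁ + c • x₂ + d • x₃ = a' • x₀ + b' • x₁ + c' • x₂ + d' • x₃) :
    a = a' ∧ b = b' ∧ c = c' ∧ d = d' := by
  have hcoeff := Fintype.linearIndependent_iffₛ.mp hx ![a, b, c, d] ![a', b', c', d']
    (by simpa [Fin.sum_univ_four, add_assoc] using h)
  exact ⟨hcoeff 0, hcoeff 1, hcoeff 2, hcoeff 3⟩

theorem slice_meets_orbit_trivially_general
    (k : Type*) [Field k]
    (W : Type*) [AddCommGroup W] [Module k W]
    (w l₁ l₂ l₃ : W) (hind : LinearIndependent k ![w, l₁, l₂, l₃])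
    (M : Matrix (Fin 2) (Fin 3) W)
    (hT : ∃ ρ σ lam₁ lam₂ lam₃ : k,
      M = Matrix.of ![![ρ • l₃, lam₁ • l₁ + lam₂ • l₂ + lam₃ • l₃, 0],
                      ![σ • l₃, 0, lam₁ • l₁ + lam₂ • l₂ + lam₃ • l₃]])
    (hF : ∃ (S : Matrix (Fin 2) (Fin 2) k) (R : Matrix (Fin 3) (Fin 3) k),
      ∀ i j, M i j =
        (∑ m : Fin 2, S i m • (Matrix.of ![![l₁, w, 0], ![l₂, 0, w]]) m j)
        - (∑ m : Fin 3, R m j • (Matrix.of ![![l₁, w, 0], ![l₂, 0, w]]) i m)) :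
    M = 0 := by
  obtain ⟨ρ, σ, lam₁, lam₂, lam₃, rfl⟩ := hT
  obtain ⟨S, R, hSR⟩ := hF
  have e00 := hSR 0 0
  have e01 := hSR 0 1
  have e10 := hSR 1 0
  have e11 := hSR 1 1
  simp only [of_apply, cons_val', cons_val_zero, cons_val_one, cons_val, cons_val_fin_one,
    Fin.sum_univ_two, Fin.sum_univ_three, smul_zero, add_zero] at e00 e01 e10 e11
  obtain ⟨-, -, -, hρ⟩ := hind.coeffs_eq_of_four (a := 0) (b := 0) (c := 0) (d := ρ)
    (a' := -R 1 0) (b' := S 0 0 - R 0 0) (c' := S 0 1) (d' := 0)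
    (by linear_combination (norm := module) e00)
  obtain ⟨-, -, -, hσ⟩ := hind.coeffs_eq_of_four (a := 0) (b := 0) (c := 0) (d := σ)
    (a' := -R 2 0) (b' := S 1 0) (c' := S 1 1 - R 0 0) (d' := 0)
    (by linear_combination (norm := module) e10)
  obtain ⟨-, -, hR, -⟩ := hind.coeffs_eq_of_four (a := 0) (b := 0) (c := 0) (d := 0)
    (a' := S 1 0 - R 2 1) (b' := 0) (c' := -R 0 1) (d' := 0)
    (by linear_combination (norm := module) e11)
  obtain ⟨-, h₁, h₂, h₃⟩ := hind.coeffs_eq_of_four (a := 0) (b := lam₁) (c := lam₂) (d := lam₃)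
    (a' := S 0 0 - R 1 1) (b' := -R 0 1) (c' := 0) (d' := 0)
    (by linear_combination (norm := module) e01)
  have hlam₁ : lam₁ = 0 := by linear_combination h₁ - hR
  ext i j
  fin_cases i <;> fin_cases j <;> simp [hρ, hσ, hlam₁, h₂, h₃]

/-- for `Q = (l₁, w, 0; l₂, 0, w)` with `w, l₁, l₂, l₃` a
linearly independent family of linear forms, the slice space `T'_Q`
(matrices `(ρl₃, λ₁l₁+λ₂l₂+λ₃l₃, 0; σl₃, 0, λ₁l₁+λ₂l₂+λ₃l₃)`) meets the
orbit tangent space `F_Q = {SQ - QR}` only in `0`. -/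
theorem slice_meets_orbit_trivially
    (k : Type*) [Field k] [CharZero k]
    (W : Type*) [AddCommGroup W] [Module k W]
    (w l₁ l₂ l₃ : W) (hind : LinearIndependent k ![w, l₁, l₂, l₃])
    (M : Matrix (Fin 2) (Fin 3) W)
    (hT : ∃ ρ σ lam₁ lam₂ lam₃ : k,
      M = Matrix.of ![![ρ • l₃, lam₁ • l₁ + lam₂ • l₂ + lam₃ • l₃, 0],
                      ![σ • l₃, 0, lam₁ • l₁ + lam₂ • l₂ + lam₃ • l₃]])
    (hF : ∃ (S : Matrix (Fin 2) (Fin 2) k) (R : Matrix (Fin 3) (Fin 3) k),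
      ∀ i j, M i j =
        (∑ m : Fin 2, S i m • (Matrix.of ![![l₁, w, 0], ![l₂, 0, w]]) m j)
        - (∑ m : Fin 3, R m j • (Matrix.of ![![l₁, w, 0], ![l₂, 0, w]]) i m)) :
    M = 0 :=
  slice_meets_orbit_trivially_general k W w l₁ l₂ l₃ hind M hT hF
end

section
/- With Q, F_Q, T'_Q as above, dim F_Q = 12, dim T'_Q = 5, and hence dim(Hom(k², k³⊗V*)/(T'_Q ⊕ F_Q)) = 24 - 17 = 7. -/
/-!
`F_Q` is the image of `(S, R) ↦ SQ - QR` on `gl₂ × gl₃`, whose kernel consists only of the scalar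
pairs `(c, c)` once `w, l₁, l₂` are independent; hence `dim F_Q = 13 - 1 = 12`. The slice is the
image of an injective map from `k⁵`, and it meets `F_Q` only in `0` because its entries involve
`l₃` (absent from `F_Q`) and its `λ₁ l₁` in position `(0, 1)` would force `λ₁ = -R₀₁`, while
position `(1, 1)` forces `R₀₁ = 0`. The quotient then has dimension `24 - 12 - 5 = 7`.
-/

open Matrix Module

theorem LinearIndependent.eq_zero_of_triple {R M : Type*} [Ring R] [AddCommGroup M] [Module R M]
    {v₀ v₁ v₂ : M} (h : LinearIndependent R ![v₀, v₁, v₂]) {a b c : R}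
    (hs : a • v₀ + b • v₁ + c • v₂ = 0) : a = 0 ∧ b = 0 ∧ c = 0 := by
  have := Fintype.linearIndependent_iff.mp h ![a, b, c] (by simpa [Fin.sum_univ_three] using hs)
  exact ⟨this 0, this 1, this 2⟩

theorem LinearIndependent.eq_zero_of_quadruple {R M : Type*} [Ring R] [AddCommGroup M]
    [Module R M] {v₀ v₁ v₂ v₃ : M} (h : LinearIndependent R ![v₀, v₁, v₂, v₃]) {a b c d : R}
    (hs : a • v₀ + b • v₁ + c • v₂ + d • v₃ = 0) : a = 0 ∧ b = 0 ∧ c = 0 ∧ d = 0 := by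
  have := Fintype.linearIndependent_iff.mp h ![a, b, c, d] (by simpa [Fin.sum_univ_four] using hs)
  exact ⟨this 0, this 1, this 2, this 3⟩

theorem Submodule.finrank_quotient_sup_add_add_of_disjoint {K V : Type*} [DivisionRing K]
    [AddCommGroup V] [Module K V] [FiniteDimensional K V] {T F : Submodule K V}
    (h : Disjoint T F) :
    finrank K (V ⧸ (T ⊔ F)) + finrank K T + finrank K F = finrank K V := by
  have hsup := Submodule.finrank_sup_add_finrank_inf_eq T F
  rw [h.eq_bot, finrank_bot] at hsup
  have := Submodule.finrank_quotient_add_finrank (T ⊔ F)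
  omega

section OrbitTangent

variable {k V m n : Type*} [CommRing k] [AddCommGroup V] [Module k V] [Fintype m] [Fintype n]

/-- The differential at `Q` of the action `(S, R) • Q = S Q R⁻¹` of `GL_m(k) × GL_n(k)`. -/
def orbitTangentMap (Q : Matrix m n V) : Matrix m m k × Matrix n n k →ₗ[k] Matrix m n V where
  toFun p := Matrix.of fun i j => (∑ l, p.1 i l • Q l j) - ∑ l, p.2 l j • Q i l
  map_add' p q := by
    ext i j
    simp only [Prod.fst_add, Prod.snd_add, Matrix.add_apply, add_smul, Finset.sum_add_distrib,
      of_apply]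
    abel
  map_smul' c p := by
    ext i j
    simp only [Prod.smul_fst, Prod.smul_snd, Matrix.smul_apply, smul_eq_mul, mul_smul,
      ← Finset.smul_sum, of_apply, RingHom.id_apply, smul_sub]

theorem span_setOf_eq_range_orbitTangentMap (Q : Matrix m n V) :
    Submodule.span k {M | ∃ (S : Matrix m m k) (R : Matrix n n k),
      ∀ i j, M i j = (∑ l, S i l • Q l j) - ∑ l, R l j • Q i l} =
      LinearMap.range (orbitTangentMap Q) := by
  convert Submodule.span_eq (LinearMap.range (orbitTangentMap (k := k) Q))
  ext M
  constructor
  · rintro ⟨S, R, h⟩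
    exact ⟨(S, R), Matrix.ext fun i j => (h i j).symm⟩
  · rintro ⟨⟨S, R⟩, rfl⟩
    exact ⟨S, R, fun i j => rfl⟩

theorem orbitTangentMap_one_one [DecidableEq m] [DecidableEq n] (Q : Matrix m n V) :
    orbitTangentMap Q ((1 : Matrix m m k), (1 : Matrix n n k)) = 0 := by
  ext i j
  simp [orbitTangentMap, one_apply]

end OrbitTangent

section Pencil

variable {k V : Type*} [CommRing k] [AddCommGroup V] [Module k V]

theorem orbitTangentMap_pencil_apply (w l₁ l₂ : V) (S : Matrix (Fin 2) (Fin 2) k)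
    (R : Matrix (Fin 3) (Fin 3) k) :
    orbitTangentMap (of ![![l₁, w, 0], ![l₂, 0, w]]) (S, R) = of
      ![![(S 0 0 - R 0 0) • l₁ + S 0 1 • l₂ - R 1 0 • w, (S 0 0 - R 1 1) • w - R 0 1 • l₁,
          (S 0 1 - R 1 2) • w - R 0 2 • l₁],
        ![S 1 0 • l₁ + (S 1 1 - R 0 0) • l₂ - R 2 0 • w, (S 1 0 - R 2 1) • w - R 0 1 • l₂,
          (S 1 1 - R 2 2) • w - R 0 2 • l₂]] := by
  ext i j
  fin_cases i <;> fin_cases j <;>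
    simp [orbitTangentMap, Fin.sum_univ_two, Fin.sum_univ_three] <;> module

theorem ker_orbitTangentMap_pencil {w l₁ l₂ : V} (hind : LinearIndependent k ![w, l₁, l₂]) :
    LinearMap.ker (orbitTangentMap (k := k) (of ![![l₁, w, 0], ![l₂, 0, w]])) =
      k ∙ ((1 : Matrix (Fin 2) (Fin 2) k), (1 : Matrix (Fin 3) (Fin 3) k)) := by
  refine le_antisymm ?_ ((Submodule.span_singleton_le_iff_mem _ _).mpr (orbitTangentMap_one_one _))
  rintro ⟨S, R⟩ hSR
  rw [LinearMap.mem_ker, orbitTangentMap_pencil_apply, ← of_zero] at hSR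
  simp only [← cons_zero_zero, EmbeddingLike.apply_eq_iff_eq, vecCons_inj,
    eq_iff_true_of_subsingleton, and_true] at hSR
  obtain ⟨⟨h00, h01, h02⟩, h10, h11, h12⟩ := hSR
  obtain ⟨e1, e2, e3⟩ := hind.eq_zero_of_triple (a := -R 1 0) (b := S 0 0 - R 0 0) (c := S 0 1)
    (by linear_combination (norm := module) h00)
  obtain ⟨e4, e5, -⟩ := hind.eq_zero_of_triple (a := S 0 0 - R 1 1) (b := -R 0 1) (c := 0)
    (by linear_combination (norm := module) h01)
  obtain ⟨e6, e7, -⟩ := hind.eq_zero_of_triple (a := S 0 1 - R 1 2) (b := -R 0 2) (c := 0)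
    (by linear_combination (norm := module) h02)
  obtain ⟨e8, e9, e10⟩ := hind.eq_zero_of_triple (a := -R 2 0) (b := S 1 0) (c := S 1 1 - R 0 0)
    (by linear_combination (norm := module) h10)
  obtain ⟨e11, -, -⟩ := hind.eq_zero_of_triple (a := S 1 0 - R 2 1) (b := 0) (c := -R 0 1)
    (by linear_combination (norm := module) h11)
  obtain ⟨e12, -, -⟩ := hind.eq_zero_of_triple (a := S 1 1 - R 2 2) (b := 0) (c := -R 0 2)
    (by linear_combination (norm := module) h12)
  refine Submodule.mem_span_singleton.mpr ⟨S 0 0, Prod.ext ?_ ?_⟩ <;>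
    ext i j <;> fin_cases i <;> fin_cases j <;> simp <;> grind

/-- The slice `T'_Q`, parametrized by `p = (ρ, σ, λ₁, λ₂, λ₃)`. -/
@[simps]
def sliceMap (l₁ l₂ l₃ : V) : (Fin 5 → k) →ₗ[k] Matrix (Fin 2) (Fin 3) V where
  toFun p := of ![![p 0 • l₃, p 2 • l₁ + p 3 • l₂ + p 4 • l₃, 0],
                  ![p 1 • l₃, 0, p 2 • l₁ + p 3 • l₂ + p 4 • l₃]]
  map_add' p q := by
    ext i j
    fin_cases i <;> fin_cases j <;> simp [add_smul] <;> abel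
  map_smul' c p := by
    ext i j
    fin_cases i <;> fin_cases j <;> simp [mul_smul, smul_add]

theorem span_setOf_eq_range_sliceMap (l₁ l₂ l₃ : V) :
    Submodule.span k {M : Matrix (Fin 2) (Fin 3) V | ∃ ρ σ lam₁ lam₂ lam₃ : k,
      M = of ![![ρ • l₃, lam₁ • l₁ + lam₂ • l₂ + lam₃ • l₃, 0],
               ![σ • l₃, 0, lam₁ • l₁ + lam₂ • l₂ + lam₃ • l₃]]} =
      LinearMap.range (sliceMap l₁ l₂ l₃) := by
  convert Submodule.span_eq (LinearMap.range (sliceMap (k := k) l₁ l₂ l₃))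
  ext M
  constructor
  · rintro ⟨ρ, σ, a, b, c, rfl⟩
    exact ⟨![ρ, σ, a, b, c], rfl⟩
  · rintro ⟨p, rfl⟩
    exact ⟨p 0, p 1, p 2, p 3, p 4, rfl⟩

theorem sliceMap_injective {l₁ l₂ l₃ : V} (hind : LinearIndependent k ![l₁, l₂, l₃]) :
    Function.Injective (sliceMap (k := k) l₁ l₂ l₃) := by
  refine (injective_iff_map_eq_zero _).mpr fun p hp => ?_
  rw [sliceMap_apply, ← of_zero] at hp
  simp only [← cons_zero_zero, EmbeddingLike.apply_eq_iff_eq, vecCons_inj,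
    eq_iff_true_of_subsingleton, and_true] at hp
  obtain ⟨⟨h00, h01⟩, h10, -⟩ := hp
  obtain ⟨-, -, e0⟩ := hind.eq_zero_of_triple (a := 0) (b := 0) (c := p 0)
    (by linear_combination (norm := module) h00)
  obtain ⟨-, -, e1⟩ := hind.eq_zero_of_triple (a := 0) (b := 0) (c := p 1)
    (by linear_combination (norm := module) h10)
  obtain ⟨e2, e3, e4⟩ := hind.eq_zero_of_triple h01
  ext i
  fin_cases i <;> assumption

theorem disjoint_range_sliceMap_orbitTangentMap {w l₁ l₂ l₃ : V}
    (hind : LinearIndependent k ![w, l₁, l₂, l₃]) :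
    Disjoint (LinearMap.range (sliceMap (k := k) l₁ l₂ l₃))
      (LinearMap.range (orbitTangentMap (k := k) (of ![![l₁, w, 0], ![l₂, 0, w]]))) := by
  rw [disjoint_iff_inf_le]
  rintro _ ⟨⟨p, rfl⟩, ⟨S, R⟩, hSR⟩
  rw [orbitTangentMap_pencil_apply, sliceMap_apply] at hSR
  simp only [EmbeddingLike.apply_eq_iff_eq, vecCons_inj, and_true] at hSR
  obtain ⟨⟨h00, h01, -⟩, h10, h11, -⟩ := hSR
  obtain ⟨-, -, -, e0⟩ := hind.eq_zero_of_quadruple (a := -R 1 0) (b := S 0 0 - R 0 0)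
    (c := S 0 1) (d := -p 0) (by linear_combination (norm := module) h00)
  obtain ⟨-, -, -, e1⟩ := hind.eq_zero_of_quadruple (a := -R 2 0) (b := S 1 0)
    (c := S 1 1 - R 0 0) (d := -p 1) (by linear_combination (norm := module) h10)
  obtain ⟨-, e2, e3, e4⟩ := hind.eq_zero_of_quadruple (a := S 0 0 - R 1 1) (b := -R 0 1 - p 2)
    (c := -p 3) (d := -p 4) (by linear_combination (norm := module) h01)
  obtain ⟨-, -, e5, -⟩ := hind.eq_zero_of_quadruple (a := S 1 0 - R 2 1) (b := 0) (c := -R 0 1)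
    (d := 0) (by linear_combination (norm := module) h11)
  have hp : p = 0 := by
    ext i
    fin_cases i <;> simp <;> grind
  rw [Submodule.mem_bot, hp, map_zero]

end Pencil

theorem finrank_range_orbitTangentMap_pencil {k V : Type*} [Field k] [AddCommGroup V]
    [Module k V] {w l₁ l₂ : V} (hind : LinearIndependent k ![w, l₁, l₂]) :
    finrank k (LinearMap.range (orbitTangentMap (k := k) (of ![![l₁, w, 0], ![l₂, 0, w]]))) =
      12 := by
  have hrank := LinearMap.finrank_range_add_finrank_ker
    (orbitTangentMap (k := k) (of ![![l₁, w, 0], ![l₂, 0, w]]))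
  have hone : ((1 : Matrix (Fin 2) (Fin 2) k), (1 : Matrix (Fin 3) (Fin 3) k)) ≠ 0 :=
    fun h => one_ne_zero (congrArg Prod.fst h)
  rw [ker_orbitTangentMap_pencil hind, finrank_span_singleton hone] at hrank
  simp only [finrank_prod, finrank_matrix, Fintype.card_fin, finrank_self] at hrank
  omega

theorem dims_of_slice_and_orbit_general
    (k : Type*) [Field k]
    (w l₁ l₂ l₃ : Fin 4 → k) (hind : LinearIndependent k ![w, l₁, l₂, l₃]) :
    let Q : Matrix (Fin 2) (Fin 3) (Fin 4 → k) := Matrix.of ![![l₁, w, 0], ![l₂, 0, w]]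
    let F : Submodule k (Matrix (Fin 2) (Fin 3) (Fin 4 → k)) :=
      Submodule.span k {M | ∃ (S : Matrix (Fin 2) (Fin 2) k) (R : Matrix (Fin 3) (Fin 3) k),
        ∀ i j, M i j = (∑ m : Fin 2, S i m • Q m j) - (∑ m : Fin 3, R m j • Q i m)}
    let T' : Submodule k (Matrix (Fin 2) (Fin 3) (Fin 4 → k)) :=
      Submodule.span k {M | ∃ ρ σ lam₁ lam₂ lam₃ : k,
        M = Matrix.of ![![ρ • l₃, lam₁ • l₁ + lam₂ • l₂ + lam₃ • l₃, 0],
                        ![σ • l₃, 0, lam₁ • l₁ + lam₂ • l₂ + lam₃ • l₃]]}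
    Module.finrank k F = 12 ∧ Module.finrank k T' = 5 ∧
    Module.finrank k (Matrix (Fin 2) (Fin 3) (Fin 4 → k)) = 24 ∧
    Module.finrank k (Matrix (Fin 2) (Fin 3) (Fin 4 → k) ⧸ (T' ⊔ F)) = 7 := by
  intro Q F T'
  have hF : F = LinearMap.range (orbitTangentMap Q) := span_setOf_eq_range_orbitTangentMap Q
  have hT : T' = LinearMap.range (sliceMap l₁ l₂ l₃) := span_setOf_eq_range_sliceMap l₁ l₂ l₃
  have hind₀₁₂ : LinearIndependent k ![w, l₁, l₂] := by
    convert hind.comp ![0, 1, 2] (by decide) using 1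
    ext i
    fin_cases i <;> rfl
  have hind₁₂₃ : LinearIndependent k ![l₁, l₂, l₃] := hind.comp Fin.succ (Fin.succ_injective _)
  have rF : finrank k F = 12 := hF ▸ finrank_range_orbitTangentMap_pencil hind₀₁₂
  have rT : finrank k T' = 5 := by
    rw [hT, LinearMap.finrank_range_of_inj (sliceMap_injective hind₁₂₃), finrank_fin_fun]
  have rM : finrank k (Matrix (Fin 2) (Fin 3) (Fin 4 → k)) = 24 := by simp [finrank_matrix]
  have hquot := Submodule.finrank_quotient_sup_add_add_of_disjoint
    (hT ▸ hF ▸ disjoint_range_sliceMap_orbitTangentMap hind)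
  exact ⟨rF, rT, rM, by omega⟩

/-- `dim F_Q = 12`, `dim T'_Q = 5`, and the quotient of the
24-dimensional space `Hom(k², k³⊗V*)` by `T'_Q ⊕ F_Q` has dimension 7. -/
theorem dims_of_slice_and_orbit
    (k : Type*) [Field k] [CharZero k]
    (w l₁ l₂ l₃ : Fin 4 → k) (hind : LinearIndependent k ![w, l₁, l₂, l₃]) :
    let Q : Matrix (Fin 2) (Fin 3) (Fin 4 → k) := Matrix.of ![![l₁, w, 0], ![l₂, 0, w]]
    let F : Submodule k (Matrix (Fin 2) (Fin 3) (Fin 4 → k)) :=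
      Submodule.span k {M | ∃ (S : Matrix (Fin 2) (Fin 2) k) (R : Matrix (Fin 3) (Fin 3) k),
        ∀ i j, M i j = (∑ m : Fin 2, S i m • Q m j) - (∑ m : Fin 3, R m j • Q i m)}
    let T' : Submodule k (Matrix (Fin 2) (Fin 3) (Fin 4 → k)) :=
      Submodule.span k {M | ∃ ρ σ lam₁ lam₂ lam₃ : k,
        M = Matrix.of ![![ρ • l₃, lam₁ • l₁ + lam₂ • l₂ + lam₃ • l₃, 0],
                        ![σ • l₃, 0, lam₁ • l₁ + lam₂ • l₂ + lam₃ • l₃]]}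
    Module.finrank k F = 12 ∧ Module.finrank k T' = 5 ∧
    Module.finrank k (Matrix (Fin 2) (Fin 3) (Fin 4 → k)) = 24 ∧
    Module.finrank k (Matrix (Fin 2) (Fin 3) (Fin 4 → k) ⧸ (T' ⊔ F)) = 7 :=
  dims_of_slice_and_orbit_general k w l₁ l₂ l₃ hind
end

section
/- Let w, l_1, l_2 be linearly independent linear forms and q_1, q_2 quadratic forms in k[x_0,...,x_3]. If the sequence 0 → k² → Sym²V* ⊕ (k³⊗V*) induced by the matrix B = (-q_1, -l_1, w, 0; -q_2, -l_2, 0, w) (evaluated on degree-3 global sections) is such that the full complex pair (B, A) with A = (w,0; 0,w; q_1,l_1; q_2,l_2) is exact in the middle, then q_1 l_2 - q_2 l_1 ≠ 0. -/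
open MvPolynomial

/-! If `q₁ l₂ = q₂ l₁`, then `(0, 0, l₂, -l₁)` is a degree-3 syzygy of `A`. Exactness writes it
as `B(a, b)`, whose third entry is `a w`; so `l₂ = a w`, contradicting the independence of
`w, l₁, l₂`. -/

theorem LinearIndependent.smul_ne_third {R M : Type*} [Ring R] [Nontrivial R]
    [AddCommGroup M] [Module R M] {x y z : M} (h : LinearIndependent R ![x, y, z]) (a : R) :
    a • x ≠ z := by
  intro hz
  have hcoeff := Fintype.linearIndependent_iff.mp h ![a, 0, -1]
    (by simp [Fin.sum_univ_three, hz]) 2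
  simp at hcoeff

theorem middle_exactness_implies_det_ne_zero_general
    (k : Type*) [Field k]
    (w l₁ l₂ q₁ q₂ : MvPolynomial (Fin 4) k)
    (hl₁ : l₁.IsHomogeneous 1) (hl₂ : l₂.IsHomogeneous 1)
    (hind : LinearIndependent k ![w, l₁, l₂])
    (hexact : ∀ u v₁ v₂ v₃ : MvPolynomial (Fin 4) k,
      u.IsHomogeneous 2 → v₁.IsHomogeneous 1 → v₂.IsHomogeneous 1 →
      v₃.IsHomogeneous 1 →
      u * w + v₂ * q₁ + v₃ * q₂ = 0 → v₁ * w + v₂ * l₁ + v₃ * l₂ = 0 →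
      ∃ a b : k,
        u = C a * (-q₁) + C b * (-q₂) ∧ v₁ = C a * (-l₁) + C b * (-l₂) ∧
        v₂ = C a * w ∧ v₃ = C b * w) :
    q₁ * l₂ - q₂ * l₁ ≠ 0 := by
  intro hdet
  obtain ⟨a, -, -, -, hl₂_eq, -⟩ := hexact 0 0 l₂ (-l₁)
    (isHomogeneous_zero _ _ _) (isHomogeneous_zero _ _ _) hl₂ hl₁.neg
    (by linear_combination hdet) (by ring)
  exact hind.smul_ne_third a (by rw [smul_eq_C_mul, hl₂_eq])

/-- if the complex given by
`B = (-q₁,-l₁,w,0; -q₂,-l₂,0,w)` and `A = (w,0; 0,w; q₁,l₁; q₂,l₂)` is exact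
in the middle on degree-3 global sections (every homogeneous element of
`ker Ã` lies in `im B̃`), then `q₁ l₂ - q₂ l₁ ≠ 0`. -/
theorem middle_exactness_implies_det_ne_zero
    (k : Type*) [Field k] [CharZero k]
    (w l₁ l₂ q₁ q₂ : MvPolynomial (Fin 4) k)
    (hw : w.IsHomogeneous 1) (hl₁ : l₁.IsHomogeneous 1) (hl₂ : l₂.IsHomogeneous 1)
    (hind : LinearIndependent k ![w, l₁, l₂])
    (hq₁ : q₁.IsHomogeneous 2) (hq₂ : q₂.IsHomogeneous 2)
    (hexact : ∀ u v₁ v₂ v₃ : MvPolynomial (Fin 4) k,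
      u.IsHomogeneous 2 → v₁.IsHomogeneous 1 → v₂.IsHomogeneous 1 →
      v₃.IsHomogeneous 1 →
      u * w + v₂ * q₁ + v₃ * q₂ = 0 → v₁ * w + v₂ * l₁ + v₃ * l₂ = 0 →
      ∃ a b : k,
        u = C a * (-q₁) + C b * (-q₂) ∧ v₁ = C a * (-l₁) + C b * (-l₂) ∧
        v₂ = C a * w ∧ v₃ = C b * w) :
    q₁ * l₂ - q₂ * l₁ ≠ 0 :=
  middle_exactness_implies_det_ne_zero_general k w l₁ l₂ q₁ q₂ hl₁ hl₂ hind hexact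
end
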